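/- Let q : ℝ × ℝ → ℝ be smooth and nowhere zero. If q satisfies the scalar meta-mKdV equation q_t = q_xxx - 3 q_x q_xx / q, then s := q² satisfies the KdV interacting soliton equation s_t = s_xxx - (3/2) (s_x² / s)_x. -/

import Mathlib

/-- partial derivative in the first (space) variable -/
noncomputable def px (q : ℝ × ℝ → ℝ) : ℝ × ℝ → ℝ := fun p => deriv (fun x => q (x, p.2)) p.1

/-- partial derivative in the second (time) variable -/
noncomputable def pt (q : ℝ × ℝ → ℝ) : ℝ × ℝ → ℝ := fun p => deriv (fun t => q (p.1, t)) p.2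

lemma sliceX_diff {f : ℝ × ℝ → ℝ} (hf : ContDiff ℝ (⊤ : ℕ∞) f) (t : ℝ) :
    Differentiable ℝ (fun x => f (x, t)) :=
  (hf.differentiable (by simp)).comp (differentiable_id.prodMk (differentiable_const _))

lemma sliceT_diff {f : ℝ × ℝ → ℝ} (hf : ContDiff ℝ (⊤ : ℕ∞) f) (x : ℝ) :
    Differentiable ℝ (fun t => f (x, t)) :=
  (hf.differentiable (by simp)).comp ((differentiable_const _).prodMk differentiable_id)

lemma px_eq_fderiv {f : ℝ × ℝ → ℝ} (hf : ContDiff ℝ (⊤ : ℕ∞) f) :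
    px f = fun p => fderiv ℝ f p (1, 0) := by
  funext p
  have h1 : HasFDerivAt (fun x : ℝ => (x, p.2)) (ContinuousLinearMap.inl ℝ ℝ ℝ) p.1 :=
    hasFDerivAt_prodMk_left p.1 p.2
  have h2 : HasFDerivAt f (fderiv ℝ f (p.1, p.2)) (p.1, p.2) :=
    ((hf.differentiable (by simp)) _).hasFDerivAt
  have h3 := (h2.comp p.1 h1).hasDerivAt
  simpa [px, Function.comp_def] using h3.deriv

lemma contDiff_px {f : ℝ × ℝ → ℝ} (hf : ContDiff ℝ (⊤ : ℕ∞) f) : ContDiff ℝ (⊤ : ℕ∞) (px f) := by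
  rw [px_eq_fderiv hf]
  exact (hf.fderiv_right (by simp)).clm_apply contDiff_const

lemma px_mul {f g : ℝ × ℝ → ℝ} (hf : ContDiff ℝ (⊤ : ℕ∞) f) (hg : ContDiff ℝ (⊤ : ℕ∞) g) :
    px (fun r => f r * g r) = fun p => px f p * g p + f p * px g p := by
  funext p
  simp only [px]
  rw [deriv_fun_mul ((sliceX_diff hf p.2) p.1) ((sliceX_diff hg p.2) p.1)]

lemma px_const_mul {f : ℝ × ℝ → ℝ} (hf : ContDiff ℝ (⊤ : ℕ∞) f) (c : ℝ) :
    px (fun r => c * f r) = fun p => c * px f p := by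
  funext p
  simp only [px]
  rw [deriv_const_mul c ((sliceX_diff hf p.2) p.1)]

lemma px_add {f g : ℝ × ℝ → ℝ} (hf : ContDiff ℝ (⊤ : ℕ∞) f) (hg : ContDiff ℝ (⊤ : ℕ∞) g) :
    px (fun r => f r + g r) = fun p => px f p + px g p := by
  funext p
  simp only [px]
  rw [deriv_fun_add ((sliceX_diff hf p.2) p.1) ((sliceX_diff hg p.2) p.1)]

lemma px_sq {f : ℝ × ℝ → ℝ} (hf : ContDiff ℝ (⊤ : ℕ∞) f) :
    px (fun r => f r ^ 2) = fun p => 2 * f p * px f p := by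
  have h : (fun r => f r ^ 2) = fun r => f r * f r := by funext r; ring
  rw [h, px_mul hf hf]
  funext p; ring

lemma pt_sq {f : ℝ × ℝ → ℝ} (hf : ContDiff ℝ (⊤ : ℕ∞) f) :
    pt (fun r => f r ^ 2) = fun p => 2 * f p * pt f p := by
  funext p
  have h : (fun t => f (p.1, t) ^ 2) = fun t => f (p.1, t) * f (p.1, t) := by
    funext t; ring
  simp only [pt, h]
  rw [deriv_fun_mul ((sliceT_diff hf p.1) p.2) ((sliceT_diff hf p.1) p.2)]
  ring

theorem stmt_17 (q : ℝ × ℝ → ℝ) (hq : ContDiff ℝ (⊤ : ℕ∞) q)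
    (hne : ∀ p : ℝ × ℝ, q p ≠ 0)
    (heq : ∀ p : ℝ × ℝ, pt q p = px (px (px q)) p - 3 * px q p * px (px q) p / q p) :
    ∀ p : ℝ × ℝ,
      pt (fun r => q r ^ 2) p
        = px (px (px (fun r => q r ^ 2))) p
          - (3 / 2) * px (fun r => (px (fun r' => q r' ^ 2) r) ^ 2 / q r ^ 2) p := by
  intro p
  have hA : ContDiff ℝ (⊤ : ℕ∞) (px q) := contDiff_px hq
  have hB : ContDiff ℝ (⊤ : ℕ∞) (px (px q)) := contDiff_px hA
  -- first derivative of q^2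
  have h1 : px (fun r => q r ^ 2) = fun r => 2 * q r * px q r := px_sq hq
  -- second derivative
  have h2 : px (px (fun r => q r ^ 2))
      = fun r => 2 * (px q r * px q r + q r * px (px q) r) := by
    rw [h1]
    have e : (fun r => 2 * q r * px q r) = fun r => (2:ℝ) * (q r * px q r) := by
      funext r; ring
    rw [e, px_const_mul (hq.mul hA), px_mul hq hA]
  -- third derivative
  have h3 : px (px (px (fun r => q r ^ 2)))
      = fun r => 2 * ((px (px q) r * px q r + px q r * px (px q) r)
          + (px q r * px (px q) r + q r * px (px (px q)) r)) := by
    rw [h2]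
    have e : (fun r => 2 * (px q r * px q r + q r * px (px q) r))
        = fun r => (2:ℝ) * ((fun r => px q r * px q r) r + (fun r => q r * px (px q) r) r) := rfl
    rw [e, px_const_mul ((hA.mul hA).add (hq.mul hB)),
      px_add (hA.mul hA) (hq.mul hB), px_mul hA hA, px_mul hq hB]
  -- the quotient term simplifies to 4 * (px q)^2
  have h4 : (fun r => (px (fun r' => q r' ^ 2) r) ^ 2 / q r ^ 2)
      = fun r => 4 * px q r ^ 2 := by
    funext r
    rw [h1]
    field_simp [hne r]
    ring
  have h5 : px (fun r => (px (fun r' => q r' ^ 2) r) ^ 2 / q r ^ 2)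
      = fun r => 4 * (2 * px q r * px (px q) r) := by
    rw [h4]
    have e : (fun r => 4 * px q r ^ 2) = fun r => (4:ℝ) * ((fun r => px q r ^ 2) r) := rfl
    rw [e, px_const_mul (hA.pow 2), px_sq hA]
  simp only [pt_sq hq, h3, h5, heq p]
  field_simp [hne p]
  ring
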